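/- Fix an integer n ≥ 1 and q ∈ (−1,1], and let f ∈ L²(ℝ₊ⁿ) be symmetric. Then Σ_{σ∈S_{2n}, σ({1,…,n})∩{1,…,n}=∅} q^{inv(σ)} ∫_{P₂(σ)} (f⊗f) ⊗ (f⊗f) = q^{n²} ⟨f,f⟩_q², where P₂(σ), for σ ∈ S_{2n}, is the pairing {{2n+1−i, 2n+σ(i)} : 1≤i≤2n} of {1,…,4n} and (f⊗f)(t₁,…,t_{2n}) := f(t₁,…,tₙ)f(t_{n+1},…,t_{2n}). -/

import Mathlib

open MeasureTheory

noncomputable section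

/-- Lebesgue measure restricted to `ℝ₊ = [0,∞)`. -/
def mR : Measure ℝ := volume.restrict (Set.Ici (0 : ℝ))

/-- Lebesgue measure on `ℝ₊ⁿ`. -/
def μn (n : ℕ) : Measure (Fin n → ℝ) := Measure.pi fun _ => mR

/-- Number of inversions of a map `σ : Fin p → Fin m`:
`inv(σ) = Card {i < j : σ i > σ j}`. -/
def invCount {p m : ℕ} (σ : Fin p → Fin m) : ℕ :=
  (Finset.univ.filter fun ij : Fin p × Fin p => ij.1 < ij.2 ∧ σ ij.2 < σ ij.1).card

/-- The `q`-inner product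
`⟨f,g⟩_q = Σ_{σ ∈ S_n} q^{inv σ} ∫ f(t_{σ(1)},…,t_{σ(n)}) g(t₁,…,t_n) dt`. -/
def qInner (n : ℕ) (q : ℝ) (f g : (Fin n → ℝ) → ℝ) : ℝ :=
  ∑ σ : Equiv.Perm (Fin n),
    q ^ invCount (fun i => σ i) * ∫ t, f (fun i => t (σ i)) * g t ∂ μn n

/-- `f*`, the mirror of `f` : `f*(t₁,…,tₙ) = f(tₙ,…,t₁)`. -/
def mirror {n : ℕ} (f : (Fin n → ℝ) → ℝ) : (Fin n → ℝ) → ℝ := fun t => f fun i => t i.rev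

/-- The pairing integral `∫_{P₂(σ)} F ⊗ H` associated with the pairing
`P₂(σ) = {{N+1-i, N+σ(i)} : 1 ≤ i ≤ N}` of `{1,…,2N}`, namely
`∫ F(s₁,…,s_N) H(s_{N+1-σ⁻¹(1)},…,s_{N+1-σ⁻¹(N)}) ds`. -/
def P2Integral (N : ℕ) (σ : Equiv.Perm (Fin N)) (F H : (Fin N → ℝ) → ℝ) : ℝ :=
  ∫ s, F s * H (fun i => s (σ.symm i).rev) ∂ μn N

/-- `f` is symmetric: for every permutation `σ`, `f(t_{σ(1)},…,t_{σ(n)}) = f(t₁,…,tₙ)`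
for almost every `t`. -/
def SymmFn {n : ℕ} (f : (Fin n → ℝ) → ℝ) : Prop :=
  ∀ σ : Equiv.Perm (Fin n), ∀ᵐ t ∂ μn n, f (fun i => t (σ i)) = f t

/-- Safe coordinate access: `gv t k = t k` when `k < m`, and `0` otherwise. -/
def gv {m : ℕ} (t : Fin m → ℝ) (k : ℕ) : ℝ := if h : k < m then t ⟨k, h⟩ else 0

/-- The `p`-th contraction `f ⌢_p g`:
`(f ⌢_p g)(t₁,…,t_{n+m-2p}) = ∫ f(t₁,…,t_{n-p},s_p,…,s₁) g(s₁,…,s_p,t_{n-p+1},…,t_{n+m-2p}) ds`. -/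
def contr (n m p : ℕ) (f : (Fin n → ℝ) → ℝ) (g : (Fin m → ℝ) → ℝ) :
    (Fin (n + m - 2 * p) → ℝ) → ℝ :=
  fun t => ∫ s : Fin p → ℝ,
      f (fun i => if (i : ℕ) < n - p then gv t i else gv s (n - 1 - (i : ℕ))) *
      g (fun j => if (j : ℕ) < p then gv s j else gv t (n - p + ((j : ℕ) - p))) ∂ μn p

/-- `α(σ)` for a (strictly decreasing, 0-indexed) `σ : Fin p → Fin n`;
in 1-indexed terms `α(σ) = Σᵢ (n+1-σ(i)) - p(p+1)/2`. -/
def alphaA (n p : ℕ) (σ : Fin p → Fin n) : ℕ := (∑ i, (n - (σ i : ℕ))) - p * (p + 1) / 2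

/-- `β(σ)` for an (injective, 0-indexed) `σ : Fin p → Fin n`;
in 1-indexed terms `β(σ) = Σᵢ σ(i) - p(p+1)/2 + inv(σ)`. -/
def betaB (n p : ℕ) (σ : Fin p → Fin n) : ℕ :=
  ((∑ i, (σ i : ℕ)) - p * (p - 1) / 2) + invCount σ

/-- `f_q^{(p)}`, as a function of `(t₁,…,t_{n-p},s_p,…,s₁)`:
`Σ_{σ : {1,…,p} → {1,…,n} strictly decreasing} q^{α(σ)} f(x₁,…,xₙ)` where `x_{σ(i)} = s_i`
and the remaining coordinates, read increasingly, are `t₁,…,t_{n-p}`. -/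
def qexpDec (n p : ℕ) (q : ℝ) (f : (Fin n → ℝ) → ℝ) : (Fin n → ℝ) → ℝ :=
  fun u => ∑ σ ∈ Finset.univ.filter (fun σ : Fin p → Fin n => ∀ i j : Fin p, i < j → σ j < σ i),
    q ^ alphaA n p σ * f (fun j =>
      if ∃ i, σ i = j then
        ∑ i ∈ Finset.univ.filter (fun i => σ i = j), gv u (n - 1 - (i : ℕ))
      else gv u ((Finset.univ.filter fun j' : Fin n => j' < j ∧ ∀ i, σ i ≠ j').card))

/-- `f_q^{[p]}`, as a function of `(s₁,…,s_p,t₁,…,t_{n-p})`: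
`Σ_{σ : {1,…,p} → {1,…,n} injective} q^{β(σ)} f(x₁,…,xₙ)` where `x_{σ(i)} = s_i`
and the remaining coordinates, read increasingly, are `t₁,…,t_{n-p}`. -/
def qexpInj (n p : ℕ) (q : ℝ) (f : (Fin n → ℝ) → ℝ) : (Fin n → ℝ) → ℝ :=
  fun u => ∑ σ ∈ Finset.univ.filter (fun σ : Fin p → Fin n => Function.Injective σ),
    q ^ betaB n p σ * f (fun j =>
      if ∃ i, σ i = j then
        ∑ i ∈ Finset.univ.filter (fun i => σ i = j), gv u (i : ℕ)
      else gv u (p + (Finset.univ.filter fun j' : Fin n => j' < j ∧ ∀ i, σ i ≠ j').card))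

/-- The `q`-contraction `f ⊗_q^p g := f_q^{(p)} ⌢_p g_q^{[p]}`. -/
def qcontr (n m p : ℕ) (q : ℝ) (f : (Fin n → ℝ) → ℝ) (g : (Fin m → ℝ) → ℝ) :
    (Fin (n + m - 2 * p) → ℝ) → ℝ :=
  contr n m p (qexpDec n p q f) (qexpInj m p q g)

/-- Two (2-element) sets form a crossing: `{x₁,y₁}, {x₂,y₂}` with `x₁ < x₂ < y₁ < y₂`. -/
def Crossing (p₁ p₂ : Finset ℕ) : Prop :=
  ∃ x₁ ∈ p₁, ∃ y₁ ∈ p₁, ∃ x₂ ∈ p₂, ∃ y₂ ∈ p₂, x₁ < x₂ ∧ x₂ < y₁ ∧ y₁ < y₂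

/-- The number of crossings `Cr(π)` of a pairing `π` (each crossing counted once:
the pair containing the smallest point is listed first). -/
def crNum (π : Finset (Finset ℕ)) : ℕ := by
  classical exact ((π ×ˢ π).filter fun pp => Crossing pp.1 pp.2).card

/-- `π` is a pairing of `{0,…,N-1}`: a partition of it into 2-element sets. -/
def IsPairingOn (N : ℕ) (π : Finset (Finset ℕ)) : Prop :=
  (∀ pr ∈ π, pr.card = 2 ∧ pr ⊆ Finset.range N) ∧ ∀ x < N, ∃! pr, pr ∈ π ∧ x ∈ pr

/-- `off n i = n₁ + … + nᵢ`, the offset of the `(i+1)`-th block. -/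
def off (n : ℕ → ℕ) (i : ℕ) : ℕ := ∑ j ∈ Finset.range i, n j

/-- `π ∈ C₂(n₁ ⊗ … ⊗ n_r)`: `π` is a pairing of the ground set partitioned into the `r`
consecutive blocks of sizes `n 0, …, n (r-1)`, and every pair of `π` meets two distinct
blocks (no pair is contained in a single block). -/
def Respects (r : ℕ) (n : ℕ → ℕ) (π : Finset (Finset ℕ)) : Prop :=
  IsPairingOn (off n r) π ∧
    ∀ pr ∈ π, ¬ ∃ i < r, ∀ x ∈ pr, off n i ≤ x ∧ x < off n (i + 1)

/-- The (finite) set `C₂(n₁ ⊗ … ⊗ n_r)` of all respecting pairings. -/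
def respPairings (r : ℕ) (n : ℕ → ℕ) : Finset (Finset (Finset ℕ)) := by
  classical exact ((Finset.range (off n r)).powerset.powerset).filter fun π => Respects r n π

/-- The pairing integral `∫_π F`: one integration variable per pair of `π`, the two
coordinates of each pair being set equal to that variable, integrated over `ℝ₊^{N/2}`. -/
def pairingIntegral (π : Finset (Finset ℕ)) (F : (ℕ → ℝ) → ℝ) : ℝ :=
  ∫ u : {pr // pr ∈ π} → ℝ,
    F (fun x => ∑ pr ∈ Finset.univ.filter (fun pr : {pr // pr ∈ π} => x ∈ pr.1), u pr)
    ∂ Measure.pi fun _ => mR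

/-- The product `f₁(t₁,…,t_{n₁}) f₂(t_{n₁+1},…,t_{n₁+n₂}) ⋯ f_r(…,t_n)` as a function of
`t : ℕ → ℝ` (blocks of sizes `n 0, …, n (r-1)`). -/
def prodBlocks (r : ℕ) (n : ℕ → ℕ) (f : ∀ i, (Fin (n i) → ℝ) → ℝ) : (ℕ → ℝ) → ℝ :=
  fun t => ∏ i ∈ Finset.range r, f i (fun j => t (off n i + (j : ℕ)))

/-- `P₂(σ) = {{n+1-i, n+σ(i)} : 1 ≤ i ≤ n}` as a pairing of `{0,…,2n-1}` (0-indexed). -/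
def P2set (n : ℕ) (σ : Equiv.Perm (Fin n)) : Finset (Finset ℕ) :=
  Finset.univ.image fun i : Fin n => ({n - 1 - (i : ℕ), n + ((σ i : Fin n) : ℕ)} : Finset ℕ)

/-- The map `φ` in the construction of `F(σ₁,σ₂,π')`: the unpaired points of the first two
blocks are mapped increasingly onto `{0,…,n₀+n₁-2p-1}` and every later point `x` is mapped
to `x - 2p`. -/
def phiF (n₀ n₁ p : ℕ) (σ₁ : Fin p → Fin n₀) (σ₂ : Fin p → Fin n₁) (x : ℕ) : ℕ :=
  if x < n₀ + n₁ then
    ((Finset.range x).filter fun y =>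
      (∀ i, ((σ₁ i : ℕ)) ≠ y) ∧ (∀ i, n₀ + (σ₂ i : ℕ) ≠ y)).card
  else x - 2 * p

/-- The pairing `F(σ₁,σ₂,π')` of the ground set `{0,…,N-1}`: it contains the `p` pairs
`{σ₁(i), n₀+σ₂(i)}`, and its remaining pairs are exactly the `φ`-preimages of the pairs
of `π'`. -/
def Fpair (N n₀ n₁ p : ℕ) (σ₁ : Fin p → Fin n₀) (σ₂ : Fin p → Fin n₁)
    (π' : Finset (Finset ℕ)) : Finset (Finset ℕ) :=
  (Finset.univ.image fun i : Fin p => ({(σ₁ i : ℕ), n₀ + (σ₂ i : ℕ)} : Finset ℕ)) ∪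
  π'.image fun pr => (Finset.range N).filter fun x =>
    (x < n₀ + n₁ → (∀ i, (σ₁ i : ℕ) ≠ x) ∧ (∀ i, n₀ + (σ₂ i : ℕ) ≠ x)) ∧
    phiF n₀ n₁ p σ₁ σ₂ x ∈ pr

/-- Block sizes `(n₁+n₂-2p, n₃, …, n_r)` after contracting the first two blocks. -/
def contractedSizes (n : ℕ → ℕ) (p : ℕ) : ℕ → ℕ
  | 0 => n 0 + n 1 - 2 * p
  | k + 1 => n (k + 2)

/-- Kernels `(f₁ ⊗_q^p f₂, f₃, …, f_r)` after contracting the first two kernels. -/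
def contractedKernels (n : ℕ → ℕ) (p : ℕ) (q : ℝ) (f : ∀ i, (Fin (n i) → ℝ) → ℝ) :
    ∀ j, (Fin (contractedSizes n p j) → ℝ) → ℝ
  | 0 => qcontr (n 0) (n 1) p q (f 0) (f 1)
  | k + 1 => f (k + 2)

end

/-!
A permutation of `{1,…,2n}` sending the first half into the second is a block swap
`i ↦ n + a(i)`, `n + j ↦ b(j)` of a unique pair `(a, b) ∈ S_n × S_n`. Every element of the
first half precedes every element of the second, so it has `n² + inv(a) + inv(b)` inversions.
Its pairing integral splits by Fubini into an integral over each half, and in each of them one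
factor `f` only sees its arguments permuted, so by symmetry both equal `∫ f²`. Summing over
`(a, b)` gives `q^{n²} (Σ_a q^{inv a} ∫ f²)²`, while `⟨f,f⟩_q = Σ_a q^{inv a} ∫ f²` for
symmetric `f`.
-/

open MeasureTheory Equiv Finset

instance : SigmaFinite mR := inferInstanceAs (SigmaFinite (volume.restrict _))

section BlockSwap

variable {m k : ℕ}

def blockSwap (a : Perm (Fin m)) (b : Perm (Fin k)) : Fin (m + k) ≃ Fin (k + m) :=
  finSumFinEquiv.symm.trans ((sumCongr a b).trans ((sumComm _ _).trans finSumFinEquiv))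

variable (a : Perm (Fin m)) (b : Perm (Fin k))

@[simp]
lemma blockSwap_castAdd (i : Fin m) : blockSwap a b (Fin.castAdd k i) = Fin.natAdd k (a i) := by
  simp [blockSwap]

@[simp]
lemma blockSwap_natAdd (j : Fin k) : blockSwap a b (Fin.natAdd m j) = Fin.castAdd m (b j) := by
  simp [blockSwap]

@[simp]
lemma blockSwap_symm_castAdd (j : Fin k) :
    (blockSwap a b).symm (Fin.castAdd m j) = Fin.natAdd m (b.symm j) := by
  simp [Equiv.symm_apply_eq]

@[simp]
lemma blockSwap_symm_natAdd (i : Fin m) :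
    (blockSwap a b).symm (Fin.natAdd k i) = Fin.castAdd k (a.symm i) := by
  simp [Equiv.symm_apply_eq]

lemma invCount_eq_sum {p r : ℕ} (g : Fin p → Fin r) :
    invCount g = ∑ x : Fin p, ∑ y : Fin p, if x < y ∧ g y < g x then 1 else 0 := by
  rw [invCount, card_filter, Fintype.sum_prod_type]

lemma invCount_blockSwap : invCount (blockSwap a b) = m * k + invCount a + invCount b := by
  simp only [invCount_eq_sum, Fin.sum_univ_add, blockSwap_castAdd, blockSwap_natAdd]
  have castAdd_lt_castAdd {p : ℕ} (r : ℕ) (i j : Fin p) :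
      Fin.castAdd r i < Fin.castAdd r j ↔ i < j := Iff.rfl
  have castAdd_lt_natAdd {p : ℕ} (r : ℕ) (i : Fin p) (j : Fin r) :
      Fin.castAdd r i < Fin.natAdd p j := by
    rw [Fin.lt_def, Fin.val_castAdd, Fin.val_natAdd]; omega
  simp [castAdd_lt_castAdd, castAdd_lt_natAdd, (castAdd_lt_natAdd _ _ _).not_gt,
    sum_add_distrib]
  ring

lemma blockSwap_injective :
    Function.Injective fun p : Perm (Fin m) × Perm (Fin k) => blockSwap p.1 p.2 := by
  rintro ⟨a, b⟩ ⟨a', b'⟩ h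
  have ha (i : Fin m) := congrArg (· (Fin.castAdd k i)) h
  have hb (j : Fin k) := congrArg (· (Fin.natAdd m j)) h
  simp only [blockSwap_castAdd, blockSwap_natAdd, Fin.natAdd_inj, Fin.castAdd_inj] at ha hb
  exact Prod.ext (Equiv.ext ha) (Equiv.ext hb)

lemma exists_blockSwap_eq {σ : Fin (m + k) ≃ Fin (k + m)}
    (hσ : ∀ i : Fin m, ∃ j, σ (Fin.castAdd k i) = Fin.natAdd k j) :
    ∃ a b, blockSwap a b = σ := by
  set ψ : Perm (Fin m ⊕ Fin k) :=
    finSumFinEquiv.trans (σ.trans (finSumFinEquiv.symm.trans (sumComm _ _)))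
  have hψ : Set.MapsTo ψ (Set.range Sum.inl) (Set.range Sum.inl) := by
    rintro _ ⟨i, rfl⟩
    obtain ⟨j, hj⟩ := hσ i
    exact ⟨j, by simp [ψ, hj]⟩
  obtain ⟨⟨a, b⟩, hab⟩ := Perm.mem_sumCongrHom_range_of_perm_mapsTo_inl hψ
  refine ⟨a, b, Equiv.ext fun x => ?_⟩
  have := congrArg (· (finSumFinEquiv.symm x)) hab
  simp only [Perm.sumCongrHom_apply] at this
  simp [blockSwap, this, ψ]

end BlockSwap

lemma filter_image_lowerHalf_disjoint_eq_image_blockSwap (n : ℕ) :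
    univ.filter (fun σ : Perm (Fin (n + n)) =>
        ((univ.filter fun i : Fin (n + n) => (i : ℕ) < n).image (fun i => σ i)) ∩
          (univ.filter fun i : Fin (n + n) => (i : ℕ) < n) = ∅) =
      univ.image fun p : Perm (Fin n) × Perm (Fin n) => blockSwap p.1 p.2 := by
  ext σ
  simp only [mem_filter, mem_univ, true_and, mem_image, Prod.exists, eq_empty_iff_forall_notMem,
    mem_inter, not_and, forall_exists_index, and_imp]
  constructor
  · intro h
    refine exists_blockSwap_eq fun i => ?_
    have hge : n ≤ (σ (Fin.castAdd n i) : ℕ) := not_lt.mp (h _ _ i.isLt rfl)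
    have hlt := (σ (Fin.castAdd n i)).isLt
    exact ⟨⟨σ (Fin.castAdd n i) - n, by omega⟩,
      Fin.ext (by simp only [Fin.val_natAdd]; omega)⟩
  · rintro ⟨a, b, rfl⟩ _ x hx rfl
    rw [show x = Fin.castAdd n ⟨x, hx⟩ from rfl, blockSwap_castAdd, Fin.val_natAdd]
    omega

section Append

variable {α : Type*} [MeasurableSpace α]

def appendMeasurableEquiv (m k : ℕ) :
    (Fin m → α) × (Fin k → α) ≃ᵐ (Fin (m + k) → α) :=
  (MeasurableEquiv.sumPiEquivProdPi fun _ => α).symm.trans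
    (MeasurableEquiv.piCongrLeft (fun _ => α) finSumFinEquiv)

lemma appendMeasurableEquiv_apply {m k : ℕ} (x : Fin m → α) (y : Fin k → α) :
    appendMeasurableEquiv m k (x, y) = Fin.append x y := by
  ext i
  refine Fin.addCases (fun i => ?_) (fun j => ?_) i
  · rw [Fin.append_left, ← finSumFinEquiv_apply_left]
    simp only [appendMeasurableEquiv, MeasurableEquiv.trans_apply,
      MeasurableEquiv.coe_piCongrLeft, piCongrLeft_apply_apply]
    rfl
  · rw [Fin.append_right, ← finSumFinEquiv_apply_right]
    simp only [appendMeasurableEquiv, MeasurableEquiv.trans_apply,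
      MeasurableEquiv.coe_piCongrLeft, piCongrLeft_apply_apply]
    rfl

lemma measurePreserving_appendMeasurableEquiv (μ : Measure α) [SigmaFinite μ] (m k : ℕ) :
    MeasurePreserving (appendMeasurableEquiv m k)
      ((Measure.pi fun _ : Fin m => μ).prod (Measure.pi fun _ : Fin k => μ))
      (Measure.pi fun _ : Fin (m + k) => μ) :=
  (measurePreserving_piCongrLeft (fun _ => μ) finSumFinEquiv).comp
    (measurePreserving_sumPiEquivProdPi_symm fun _ => μ)

end Append

lemma gv_castAdd {m k : ℕ} (t : Fin (m + k) → ℝ) (i : Fin m) :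
    gv t i = t (Fin.castAdd k i) := by
  rw [gv, dif_pos (by omega)]; rfl

lemma gv_natAdd {m k : ℕ} (t : Fin (m + k) → ℝ) (j : Fin k) :
    gv t (m + j) = t (Fin.natAdd m j) := by
  rw [gv, dif_pos (by omega)]; rfl

lemma Fin.rev_castAdd_self {n : ℕ} (i : Fin n) : (Fin.castAdd n i).rev = Fin.natAdd n i.rev := by
  ext; simp only [Fin.val_rev, Fin.val_castAdd, Fin.val_natAdd]; omega

lemma Fin.rev_natAdd_self {n : ℕ} (i : Fin n) : (Fin.natAdd n i).rev = Fin.castAdd n i.rev := by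
  ext; simp only [Fin.val_rev, Fin.val_castAdd, Fin.val_natAdd]; omega

lemma P2Integral_blockSwap {n : ℕ} (a b : Perm (Fin n)) (f g f' g' : (Fin n → ℝ) → ℝ) :
    P2Integral (n + n) (blockSwap a b)
      (fun t => f (fun i => gv t i) * g (fun i => gv t (n + i)))
      (fun t => f' (fun i => gv t i) * g' (fun i => gv t (n + i))) =
    (∫ x, f' (fun i => x (b.symm i).rev) * f x ∂μn n) *
      ∫ y, g' (fun i => y (a.symm i).rev) * g y ∂μn n := by
  simp only [P2Integral, μn]
  rw [← (measurePreserving_appendMeasurableEquiv mR n n).integral_comp', ← integral_prod_mul]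
  refine integral_congr_ae (Filter.Eventually.of_forall fun ⟨x, y⟩ => ?_)
  simp only [appendMeasurableEquiv_apply, gv_castAdd, gv_natAdd, blockSwap_symm_castAdd,
    blockSwap_symm_natAdd, Fin.rev_castAdd_self, Fin.rev_natAdd_self, Fin.append_left,
    Fin.append_right]
  ring

lemma SymmFn.integral_comp_mul {n : ℕ} {f : (Fin n → ℝ) → ℝ} (hf : SymmFn f)
    (ρ : Perm (Fin n)) (g : (Fin n → ℝ) → ℝ) :
    ∫ t, f (fun i => t (ρ i)) * g t ∂μn n = ∫ t, f t * g t ∂μn n :=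
  integral_congr_ae <| (hf ρ).mono fun t ht => congrArg (· * g t) ht

lemma SymmFn.qInner_eq_sum_mul_integral {n : ℕ} {f : (Fin n → ℝ) → ℝ} (hf : SymmFn f)
    (q : ℝ) (g : (Fin n → ℝ) → ℝ) :
    qInner n q f g = (∑ σ : Perm (Fin n), q ^ invCount σ) * ∫ t, f t * g t ∂μn n := by
  simp only [qInner, hf.integral_comp_mul, sum_mul]

theorem stmt13_general (n : ℕ) (q : ℝ) (f : (Fin n → ℝ) → ℝ) (hsym : SymmFn f) :
    ∑ σ ∈ Finset.univ.filter (fun σ : Equiv.Perm (Fin (2 * n)) =>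
        ((Finset.univ.filter fun i : Fin (2 * n) => (i : ℕ) < n).image (fun i => σ i)) ∩
          (Finset.univ.filter fun i : Fin (2 * n) => (i : ℕ) < n) = ∅),
      q ^ invCount (fun i => σ i) *
        P2Integral (2 * n) σ
          (fun t => f (fun i => gv t (i : ℕ)) * f (fun i => gv t (n + (i : ℕ))))
          (fun t => f (fun i => gv t (i : ℕ)) * f (fun i => gv t (n + (i : ℕ)))) =
    q ^ (n ^ 2) * (qInner n q f f) ^ 2 := by
  rw [two_mul]
  have hterm (a b : Perm (Fin n)) : P2Integral (n + n) (blockSwap a b)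
      (fun t => f (fun i => gv t (i : ℕ)) * f (fun i => gv t (n + (i : ℕ))))
      (fun t => f (fun i => gv t (i : ℕ)) * f (fun i => gv t (n + (i : ℕ)))) =
      (∫ t, f t * f t ∂μn n) ^ 2 := by
    rw [P2Integral_blockSwap, sq]
    congr 1
    exacts [hsym.integral_comp_mul (b.symm.trans Fin.revPerm) f,
      hsym.integral_comp_mul (a.symm.trans Fin.revPerm) f]
  rw [filter_image_lowerHalf_disjoint_eq_image_blockSwap, sum_image blockSwap_injective.injOn,
    Fintype.sum_prod_type]
  simp only [invCount_blockSwap, hterm, hsym.qInner_eq_sum_mul_integral, pow_add, sq,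
    mul_sum, sum_mul]
  refine sum_congr rfl fun a _ => sum_congr rfl fun b _ => by ring

/-- For symmetric `f ∈ L²(ℝ₊ⁿ)` and `q ∈ (-1,1]`:
`Σ_{σ ∈ S_{2n}, σ({1,…,n}) ∩ {1,…,n} = ∅} q^{inv σ} ∫_{P₂(σ)} (f⊗f) ⊗ (f⊗f)
 = q^{n²} ⟨f,f⟩_q²`. -/
theorem stmt13 (n : ℕ) (hn : 1 ≤ n) (q : ℝ) (hq₁ : -1 < q) (hq₂ : q ≤ 1)
    (f : (Fin n → ℝ) → ℝ) (hf : MemLp f 2 (μn n)) (hsym : SymmFn f) :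
    ∑ σ ∈ Finset.univ.filter (fun σ : Equiv.Perm (Fin (2 * n)) =>
        ((Finset.univ.filter fun i : Fin (2 * n) => (i : ℕ) < n).image (fun i => σ i)) ∩
          (Finset.univ.filter fun i : Fin (2 * n) => (i : ℕ) < n) = ∅),
      q ^ invCount (fun i => σ i) *
        P2Integral (2 * n) σ
          (fun t => f (fun i => gv t (i : ℕ)) * f (fun i => gv t (n + (i : ℕ))))
          (fun t => f (fun i => gv t (i : ℕ)) * f (fun i => gv t (n + (i : ℕ)))) =
    q ^ (n ^ 2) * (qInner n q f f) ^ 2 :=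
  stmt13_general n q f hsym
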